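/- arXiv:1602.08458 — 4 statements merged into one kernel-verified Lean document; each statement's English description precedes it below -/
import Mathlib

section
/- Let F(s) = 1 + 2·4^{−s} and G(s) = 1 + 3·9^{−s}. Then F and G are entire functions of order 1, the functions F − 1 and G − 1 have no zeros in ℂ, F and G satisfy the functional equations 2^s F(s) = 2^{1−s}·conj(F(1 − conj(s))) and 3^s G(s) = 3^{1−s}·conj(G(1 − conj(s))) for all s ∈ ℂ, and yet F ≢ G. -/
/-!
Both functions have the form `f(s) = 1 + e^ℓ e^{-2ℓs}` (with `ℓ = log 2`, resp. `ℓ = log 3`).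
Such an `f` is bounded by `1 + e^ℓ e^{2ℓ|s|}`, which Young's inequality turns into a bound
`C e^{|s|^ρ}` for every `ρ > 1`, while on the negative real axis `f(-x)` grows like `e^{2ℓx}`,
faster than any `e^{x^ρ}` with `ρ < 1`. The functional equation holds because
`e^{ℓs} f(s) = e^{ℓs} + e^{ℓ(1-s)}` is symmetric under `s ↦ 1 - s`, and reflecting through
conjugation does nothing since the coefficients are real. Finally `F(0) = 3 ≠ 4 = G(0)`.
-/

open Complex Filter

/-- `f` grows at most like `exp(|s|^ρ)`. The order of an entire function is the infimum
of the `ρ` for which this holds. -/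
def GrowthOrderLE (f : ℂ → ℂ) (ρ : ℝ) : Prop :=
  ∃ C : ℝ, ∀ s : ℂ, ‖f s‖ ≤ C * Real.exp (‖s‖ ^ ρ)

/-- `F(s) = 1 + 2·4^{-s}`. -/
noncomputable def Fex : ℂ → ℂ := fun s => 1 + 2 * Complex.exp (-s * (Real.log 4 : ℂ))

/-- `G(s) = 1 + 3·9^{-s}`. -/
noncomputable def Gex : ℂ → ℂ := fun s => 1 + 3 * Complex.exp (-s * (Real.log 9 : ℂ))

theorem exists_mul_le_add_rpow {L ρ : ℝ} (hL : 0 ≤ L) (hρ : 1 < ρ) :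
    ∃ K : ℝ, ∀ x : ℝ, 0 ≤ x → L * x ≤ K + x ^ ρ := by
  set q := ρ.conjExponent
  refine ⟨L ^ q / q, fun x hx => ?_⟩
  have hyoung := Real.young_inequality_of_nonneg hx hL (Real.HolderConjugate.conjExponent hρ)
  have : x ^ ρ / ρ ≤ x ^ ρ := div_le_self (Real.rpow_nonneg hx ρ) hρ.le
  linarith

theorem tendsto_mul_sub_rpow_atTop {L ρ : ℝ} (hL : 0 < L) (hρ : ρ < 1) :
    Tendsto (fun x : ℝ => L * x - x ^ ρ) atTop atTop := by
  have hsmall : ∀ᶠ x : ℝ in atTop, x ^ (ρ - 1) ≤ L / 2 := by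
    have := tendsto_rpow_neg_atTop (y := 1 - ρ) (by linarith)
    rw [neg_sub] at this
    exact this.eventually (ge_mem_nhds (by linarith))
  refine tendsto_atTop_mono' _ ?_ (tendsto_id.const_mul_atTop (half_pos hL))
  filter_upwards [hsmall, eventually_gt_atTop 0] with x hx hx0
  have : x ^ ρ = x ^ (ρ - 1) * x := by
    rw [← Real.rpow_add_one hx0.ne']; ring_nf
  simp only [id]
  nlinarith

/-- `1 + c·n^{-s}` is `oneAddDirichletTerm c (log n) s`. -/
noncomputable def oneAddDirichletTerm (c : ℂ) (L : ℝ) (s : ℂ) : ℂ :=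
  1 + c * exp (-s * L)

namespace oneAddDirichletTerm

variable (c : ℂ) (L : ℝ)

theorem differentiable : Differentiable ℂ (oneAddDirichletTerm c L) := by
  unfold oneAddDirichletTerm
  fun_prop

theorem sub_one_ne_zero (hc : c ≠ 0) (s : ℂ) : oneAddDirichletTerm c L s - 1 ≠ 0 := by
  simp [oneAddDirichletTerm, hc, exp_ne_zero]

theorem norm_le (s : ℂ) : ‖oneAddDirichletTerm c L s‖ ≤ 1 + ‖c‖ * Real.exp (|L| * ‖s‖) := by
  have hexp : ‖exp (-s * L)‖ ≤ Real.exp (|L| * ‖s‖) := by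
    rw [norm_exp]
    gcongr
    calc (-s * L).re = -s.re * L := by simp
      _ ≤ |-s.re * L| := le_abs_self _
      _ ≤ |L| * ‖s‖ := by rw [abs_mul, abs_neg, mul_comm]; gcongr; exact abs_re_le_norm s
  calc ‖oneAddDirichletTerm c L s‖ ≤ ‖(1 : ℂ)‖ + ‖c‖ * ‖exp (-s * L)‖ := by
        rw [← norm_mul]; exact norm_add_le _ _
    _ ≤ 1 + ‖c‖ * Real.exp (|L| * ‖s‖) := by rw [norm_one]; gcongr

theorem norm_mul_exp_sub_one_le_norm_neg (x : ℝ) :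
    ‖c‖ * Real.exp (L * x) - 1 ≤ ‖oneAddDirichletTerm c L (-x)‖ := by
  have h : oneAddDirichletTerm c L (-x) - 1 = c * Real.exp (L * x) := by
    simp [oneAddDirichletTerm, mul_comm]
  calc ‖c‖ * Real.exp (L * x) - 1 = ‖oneAddDirichletTerm c L (-x) - 1‖ - ‖(1 : ℂ)‖ := by
        rw [h, norm_mul, norm_real, Real.norm_of_nonneg (Real.exp_pos _).le, norm_one]
    _ ≤ ‖oneAddDirichletTerm c L (-x)‖ := by
        have := norm_sub_le (oneAddDirichletTerm c L (-x)) 1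
        linarith

theorem growthOrderLE {ρ : ℝ} (hρ : 1 < ρ) : GrowthOrderLE (oneAddDirichletTerm c L) ρ := by
  obtain ⟨K, hK⟩ := exists_mul_le_add_rpow (abs_nonneg L) hρ
  refine ⟨(1 + ‖c‖) * Real.exp K, fun s => ?_⟩
  have hE : Real.exp (|L| * ‖s‖) ≤ Real.exp K * Real.exp (‖s‖ ^ ρ) := by
    rw [← Real.exp_add]; exact Real.exp_le_exp.mpr (hK _ (norm_nonneg s))
  have hE1 : 1 ≤ Real.exp (|L| * ‖s‖) := Real.one_le_exp (by positivity)
  calc ‖oneAddDirichletTerm c L s‖ ≤ 1 + ‖c‖ * Real.exp (|L| * ‖s‖) := norm_le c L s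
    _ ≤ (1 + ‖c‖) * Real.exp (|L| * ‖s‖) := by nlinarith [norm_nonneg c]
    _ ≤ (1 + ‖c‖) * Real.exp K * Real.exp (‖s‖ ^ ρ) := by
        rw [mul_assoc]; gcongr

theorem not_growthOrderLE {c : ℂ} (hc : c ≠ 0) {L ρ : ℝ} (hL : 0 < L) (hρ : ρ < 1) :
    ¬ GrowthOrderLE (oneAddDirichletTerm c L) ρ := by
  rintro ⟨C, hC⟩
  have hc' : 0 < ‖c‖ := norm_pos_iff.mpr hc
  have hbounded : ∀ x : ℝ, 0 ≤ x → ‖c‖ * Real.exp (L * x - x ^ ρ) ≤ C + 1 := by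
    intro x hx
    have hgrowth := (norm_mul_exp_sub_one_le_norm_neg c L x).trans (hC (-x))
    rw [norm_neg, norm_real, Real.norm_of_nonneg hx] at hgrowth
    have hpos := Real.exp_pos (x ^ ρ)
    have h1 : 1 ≤ Real.exp (x ^ ρ) := Real.one_le_exp (Real.rpow_nonneg hx ρ)
    rw [Real.exp_sub, mul_div_assoc', div_le_iff₀ hpos]
    nlinarith
  obtain ⟨x, hlarge, hx⟩ := (((Real.tendsto_exp_atTop.comp
    (tendsto_mul_sub_rpow_atTop hL hρ)).eventually_gt_atTop ((C + 1) / ‖c‖)).and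
    (eventually_ge_atTop 0)).exists
  have := hbounded x hx
  rw [Function.comp_apply, div_lt_iff₀ hc'] at hlarge
  linarith

theorem functional_equation (ℓ : ℝ) (s : ℂ) :
    exp (s * ℓ) * oneAddDirichletTerm (exp ℓ) (2 * ℓ) s =
      exp ((1 - s) * ℓ) *
        starRingEnd ℂ (oneAddDirichletTerm (exp ℓ) (2 * ℓ) (1 - starRingEnd ℂ s)) := by
  have hconj : starRingEnd ℂ (oneAddDirichletTerm (exp ℓ) (2 * ℓ) (1 - starRingEnd ℂ s)) =
      oneAddDirichletTerm (exp ℓ) (2 * ℓ) (1 - s) := by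
    simp [oneAddDirichletTerm, ← exp_conj, map_ofNat]
  rw [hconj]
  simp only [oneAddDirichletTerm, mul_add, mul_one, ← exp_add]
  push_cast
  ring_nf

end oneAddDirichletTerm

/-- `F(s) = 1 + 2·4^{-s}` and `G(s) = 1 + 3·9^{-s}` are entire of order `1`, share the
value `1` trivially (`F - 1` and `G - 1` have no zeros), satisfy the functional equations
`2^s F(s) = 2^{1-s} conj(F(1 - conj s))` and `3^s G(s) = 3^{1-s} conj(G(1 - conj s))`,
and yet `F ≢ G`. -/
theorem stmt11 :
    Differentiable ℂ Fex ∧ Differentiable ℂ Gex ∧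
    (∀ ρ : ℝ, 1 < ρ → GrowthOrderLE Fex ρ) ∧ (∀ ρ : ℝ, ρ < 1 → ¬ GrowthOrderLE Fex ρ) ∧
    (∀ ρ : ℝ, 1 < ρ → GrowthOrderLE Gex ρ) ∧ (∀ ρ : ℝ, ρ < 1 → ¬ GrowthOrderLE Gex ρ) ∧
    (∀ s : ℂ, Fex s - 1 ≠ 0) ∧ (∀ s : ℂ, Gex s - 1 ≠ 0) ∧
    (∀ s : ℂ, Complex.exp (s * (Real.log 2 : ℂ)) * Fex s =
      Complex.exp ((1 - s) * (Real.log 2 : ℂ)) *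
        (starRingEnd ℂ) (Fex (1 - (starRingEnd ℂ) s))) ∧
    (∀ s : ℂ, Complex.exp (s * (Real.log 3 : ℂ)) * Gex s =
      Complex.exp ((1 - s) * (Real.log 3 : ℂ)) *
        (starRingEnd ℂ) (Gex (1 - (starRingEnd ℂ) s))) ∧
    Fex ≠ Gex := by
  have hF : Fex = oneAddDirichletTerm (exp (Real.log 2)) (2 * Real.log 2) := by
    rw [← ofReal_exp, Real.exp_log two_pos, ← Real.log_rpow two_pos]
    norm_num [Fex, oneAddDirichletTerm]
    rfl
  have hG : Gex = oneAddDirichletTerm (exp (Real.log 3)) (2 * Real.log 3) := by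
    rw [← ofReal_exp, Real.exp_log three_pos, ← Real.log_rpow three_pos]
    norm_num [Gex, oneAddDirichletTerm]
    rfl
  have hFG : Fex ≠ Gex := fun h => by simpa [Fex, Gex] using congrFun h 0
  have hlog2 : 0 < 2 * Real.log 2 := mul_pos two_pos (Real.log_pos one_lt_two)
  have hlog3 : 0 < 2 * Real.log 3 := mul_pos two_pos (Real.log_pos (by norm_num))
  rw [hF, hG] at hFG ⊢
  open oneAddDirichletTerm in
  exact ⟨differentiable _ _, differentiable _ _,
    fun _ => growthOrderLE _ _, fun _ => not_growthOrderLE (exp_ne_zero _) hlog2,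
    fun _ => growthOrderLE _ _, fun _ => not_growthOrderLE (exp_ne_zero _) hlog3,
    sub_one_ne_zero _ _ (exp_ne_zero _), sub_one_ne_zero _ _ (exp_ne_zero _),
    functional_equation _, functional_equation _, hFG⟩
end

section
/- Let (wₙ) be a sequence of nonzero complex numbers such that Σₙ |wₙ|^{−2} converges, and let n(t) denote the number of indices k with |w_k| ≤ t. Then the infinite product Π(s) = ∏ₙ₌₁^∞ (1 − s/wₙ) e^{s/wₙ} defines an entire function whose zeros are exactly the wₙ, and for every s ∈ ℂ one has log|Π(s)| ≤ 4(2 + log 2)·( |s| ∫₀^{|s|} n(t)/t² dt + |s|² ∫_{|s|}^∞ n(t)/t³ dt ). -/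
open Complex Filter MeasureTheory Set

/-!
Write `E(z) = (1 - z) eᶻ`. Since `‖E(z) - 1‖ ≤ 3‖z‖²` for `‖z‖ ≤ 1`, the factors `E(s/wₙ) - 1`
are dominated, locally uniformly in `s`, by a multiple of `‖wₙ‖⁻²`; so the product converges
locally uniformly, is entire, and vanishes only where one of its factors does.

For the growth bound, `log‖E(z)‖ ≤ 3 min(‖z‖, ‖z‖²)`. Writing `n(t)` as the sum over `k` of the
indicators of `[‖w_k‖, ∞)` and integrating term by term, with `r = ‖s‖` the two integrals become
`∑_{‖w_k‖ ≤ r} (1/‖w_k‖ - 1/r)` and `∑_k 1/(2 max(r, ‖w_k‖)²)`. Comparing term by term, the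
factor of `w_k` contributes to `log‖Π(s)‖` at most `6` times its share of
`r ∫₀^r n(t)/t² dt + r² ∫_r^∞ n(t)/t³ dt`, and `6 ≤ 4(2 + log 2)`.
-/

noncomputable def weierstrassFactor (z : ℂ) : ℂ := (1 - z) * exp z

theorem weierstrassFactor_eq_zero_iff {z : ℂ} : weierstrassFactor z = 0 ↔ z = 1 := by
  simp [weierstrassFactor, sub_eq_zero, eq_comm (a := z)]

theorem weierstrassFactor_div_eq_zero_iff {s w : ℂ} (hw : w ≠ 0) :
    weierstrassFactor (s / w) = 0 ↔ s = w := by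
  rw [weierstrassFactor_eq_zero_iff, div_eq_one_iff_eq hw]

theorem norm_weierstrassFactor_sub_one_le {z : ℂ} (hz : ‖z‖ ≤ 1) :
    ‖weierstrassFactor z - 1‖ ≤ 3 * ‖z‖ ^ 2 :=
  calc ‖weierstrassFactor z - 1‖ = ‖(exp z - 1 - z) - z * (exp z - 1)‖ := by
        rw [weierstrassFactor]; ring_nf
    _ ≤ ‖exp z - 1 - z‖ + ‖z‖ * ‖exp z - 1‖ := (norm_sub_le _ _).trans_eq (by rw [norm_mul])
    _ ≤ ‖z‖ ^ 2 + ‖z‖ * (2 * ‖z‖) := by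
        gcongr
        exacts [norm_exp_sub_one_sub_id_le hz, norm_exp_sub_one_le hz]
    _ = 3 * ‖z‖ ^ 2 := by ring

theorem log_norm_weierstrassFactor_le (z : ℂ) :
    Real.log ‖weierstrassFactor z‖ ≤ 3 * min ‖z‖ (‖z‖ ^ 2) := by
  rcases eq_or_ne (weierstrassFactor z) 0 with h | h
  · rw [h, norm_zero, Real.log_zero]
    positivity
  have hE : 0 < ‖weierstrassFactor z‖ := norm_pos_iff.2 h
  have h1 : (1 : ℂ) - z ≠ 0 := left_ne_zero_of_mul h
  rcases le_or_gt ‖z‖ 1 with hz | hz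
  · calc Real.log ‖weierstrassFactor z‖ ≤ ‖weierstrassFactor z‖ - 1 :=
          Real.log_le_sub_one_of_pos hE
      _ ≤ ‖weierstrassFactor z - 1‖ := by
          simpa using norm_sub_norm_le (weierstrassFactor z) 1
      _ ≤ 3 * ‖z‖ ^ 2 := norm_weierstrassFactor_sub_one_le hz
      _ = 3 * min ‖z‖ (‖z‖ ^ 2) := by
          rw [min_eq_right (by nlinarith [norm_nonneg z])]
  · calc Real.log ‖weierstrassFactor z‖ = Real.log ‖1 - z‖ + z.re := by
          rw [weierstrassFactor, norm_mul, norm_exp,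
            Real.log_mul (norm_ne_zero_iff.2 h1) (Real.exp_ne_zero _), Real.log_exp]
      _ ≤ (‖1 - z‖ - 1) + ‖z‖ :=
          add_le_add (Real.log_le_sub_one_of_pos (norm_pos_iff.2 h1)) (re_le_norm z)
      _ ≤ 2 * ‖z‖ := by linarith [norm_sub_le (1 : ℂ) z, norm_one (α := ℂ)]
      _ ≤ 3 * min ‖z‖ (‖z‖ ^ 2) := by
          rw [min_eq_left (by nlinarith)]
          linarith

theorem log_norm_weierstrassFactor_div_le {s w : ℂ} (hs : s ≠ 0) (hw : w ≠ 0) :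
    Real.log ‖weierstrassFactor (s / w)‖ ≤
      6 * (‖s‖ * max (‖w‖⁻¹ - ‖s‖⁻¹) 0 + ‖s‖ ^ 2 * ((max ‖s‖ ‖w‖ ^ 2)⁻¹ / 2)) := by
  have hr : 0 < ‖s‖ := norm_pos_iff.2 hs
  have hm : 0 < ‖w‖ := norm_pos_iff.2 hw
  refine (log_norm_weierstrassFactor_le _).trans ?_
  rw [norm_div]
  rcases le_or_gt ‖w‖ ‖s‖ with h | h
  · have hx : 1 ≤ ‖s‖ / ‖w‖ := (one_le_div hm).2 h
    have hrhs : ‖s‖ * (‖w‖⁻¹ - ‖s‖⁻¹) + ‖s‖ ^ 2 * ((‖s‖ ^ 2)⁻¹ / 2) = ‖s‖ / ‖w‖ - 1 / 2 := by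
      field_simp
      ring
    rw [min_eq_left (by nlinarith), max_eq_left h, max_eq_left (sub_nonneg.2 (inv_anti₀ hm h)),
      hrhs]
    linarith
  · have hx : ‖s‖ / ‖w‖ < 1 := (div_lt_one hm).2 h
    rw [min_eq_right (by nlinarith [div_nonneg hr.le hm.le]), max_eq_right h.le,
      max_eq_right (sub_nonpos.2 (inv_anti₀ hr h.le))]
    apply le_of_eq
    ring

section CountingFunction

variable {a : ℕ → ℝ}

-- No finiteness is needed: for an infinite set `ncard` is `0`, and so is the non-summable `tsum`.
theorem ncard_setOf_le_mul_eq_tsum_indicator (g : ℝ → ℝ) (t : ℝ) :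
    ({k | a k ≤ t}.ncard : ℝ) * g t = ∑' k, (Ici (a k)).indicator g t := by
  have : ∀ k, (Ici (a k)).indicator g t = {k | a k ≤ t}.indicator (fun _ => g t) k := fun k => by
    simp [indicator_apply]
  rw [tsum_congr this, ← tsum_subtype, tsum_const, Nat.card_coe_set_eq, nsmul_eq_mul]

theorem integral_ncard_setOf_le_mul {s : Set ℝ} (hs : MeasurableSet s) {g : ℝ → ℝ}
    (hg0 : ∀ t ∈ s, 0 ≤ g t) (hg : ∀ k, IntegrableOn g (s ∩ Ici (a k)))
    (hsum : Summable fun k => ∫ t in s ∩ Ici (a k), g t) :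
    ∫ t in s, ({k | a k ≤ t}.ncard : ℝ) * g t = ∑' k, ∫ t in s ∩ Ici (a k), g t := by
  have hind : ∀ k, IntegrableOn ((Ici (a k)).indicator g) s := fun k => by
    rw [IntegrableOn, integrable_indicator_iff measurableSet_Ici, IntegrableOn,
      Measure.restrict_restrict measurableSet_Ici, inter_comm]
    exact hg k
  have hnorm : ∀ k, ∫⁻ t in s, ‖(Ici (a k)).indicator g t‖ₑ =
      ENNReal.ofReal (∫ t in s ∩ Ici (a k), g t) := fun k => by
    rw [← ofReal_integral_norm_eq_lintegral_enorm (hind k),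
      ← setIntegral_indicator measurableSet_Ici]
    congr 1
    refine setIntegral_congr_fun hs fun t ht => ?_
    exact Real.norm_of_nonneg (indicator_apply_nonneg fun _ => hg0 t ht)
  have hfin : ∑' k, ∫⁻ t in s, ‖(Ici (a k)).indicator g t‖ₑ ≠ ⊤ := by
    simp_rw [hnorm]
    rw [← ENNReal.ofReal_tsum_of_nonneg (fun k => setIntegral_nonneg (hs.inter measurableSet_Ici)
      fun t ht => hg0 t ht.1) hsum]
    exact ENNReal.ofReal_ne_top
  simp_rw [ncard_setOf_le_mul_eq_tsum_indicator]
  rw [integral_tsum (fun k => (hind k).aestronglyMeasurable) hfin]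
  exact tsum_congr fun k => setIntegral_indicator measurableSet_Ici

end CountingFunction

theorem integrableOn_Ioc_inter_Ici_inv_sq {m : ℝ} (hm : 0 < m) (r : ℝ) :
    IntegrableOn (fun t : ℝ => (t ^ 2)⁻¹) (Ioc 0 r ∩ Ici m) := by
  refine (ContinuousOn.integrableOn_Icc (fun t ht => ?_)).mono_set
    fun t ht => ⟨ht.2, ht.1.2⟩
  exact (continuousAt_id.pow 2).inv₀ (pow_ne_zero 2 (hm.trans_le ht.1).ne') |>.continuousWithinAt

theorem integral_Ioc_inter_Ici_inv_sq {m r : ℝ} (hm : 0 < m) (hr : 0 < r) :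
    ∫ t in Ioc 0 r ∩ Ici m, (t ^ 2)⁻¹ = max (m⁻¹ - r⁻¹) 0 := by
  have hset : (Ioc 0 r ∩ Ici m : Set ℝ) =ᵐ[volume] (Ioc m r : Set ℝ) := by
    have : Ioc 0 r ∩ Ioi m = Ioc m r := by rw [Ioc_inter_Ioi, max_eq_right hm.le]
    rw [← this]
    exact EventuallyEq.rfl.inter Ioi_ae_eq_Ici.symm
  rw [setIntegral_congr_set hset]
  rcases le_or_gt m r with hmr | hrm
  · have hderiv : ∀ t ∈ uIcc m r, HasDerivAt (fun t : ℝ => -t⁻¹) (t ^ 2)⁻¹ t := fun t ht => by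
      have ht0 : t ≠ 0 := (hm.trans_le (uIcc_of_le hmr ▸ ht).1).ne'
      simpa using (hasDerivAt_inv ht0).fun_neg
    rw [← intervalIntegral.integral_of_le hmr, intervalIntegral.integral_eq_sub_of_hasDerivAt hderiv
      ((intervalIntegrable_iff_integrableOn_Ioc_of_le hmr).2
        ((integrableOn_Ioc_inter_Ici_inv_sq hm r).congr_set_ae hset.symm))]
    rw [max_eq_left (sub_nonneg.2 (inv_anti₀ hm hmr))]
    ring
  · rw [Ioc_eq_empty (not_lt.2 hrm.le), Measure.restrict_empty, integral_zero_measure,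
      max_eq_right (sub_nonpos.2 (inv_anti₀ hr hrm.le))]

theorem integrableOn_Ioi_inv_cube {c : ℝ} (hc : 0 < c) :
    IntegrableOn (fun t : ℝ => (t ^ 3)⁻¹) (Ioi c) := by
  refine (integrableOn_Ioi_rpow_of_lt (show (-3 : ℝ) < -1 by norm_num) hc).congr_fun
    (fun t ht => ?_) measurableSet_Ioi
  simp [Real.rpow_neg (hc.trans ht).le]

theorem integral_Ioi_inv_cube {c : ℝ} (hc : 0 < c) :
    ∫ t in Ioi c, (t ^ 3)⁻¹ = (c ^ 2)⁻¹ / 2 := by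
  have hrpow : EqOn (fun t : ℝ => t ^ (-3 : ℝ)) (fun t => (t ^ 3)⁻¹) (Ioi c) := fun t ht => by
    simp [Real.rpow_neg (hc.trans ht).le]
  rw [← setIntegral_congr_fun measurableSet_Ioi hrpow, integral_Ioi_rpow_of_lt (by norm_num) hc,
    show (-3 : ℝ) + 1 = -2 by norm_num, Real.rpow_neg hc.le]
  norm_num

theorem Ioi_inter_Ici_ae_eq {μ : Measure ℝ} [NullSingletonClass μ] (r m : ℝ) :
    (Ioi r ∩ Ici m : Set ℝ) =ᵐ[μ] (Ioi (max r m) : Set ℝ) := by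
  rw [← Ioi_inter_Ioi]
  exact EventuallyEq.rfl.inter Ioi_ae_eq_Ici.symm

section CountingIntegrals

variable {a : ℕ → ℝ} {r : ℝ}

theorem summable_max_inv_sub_inv (hr : 0 < r) (hfin : {k | a k ≤ r}.Finite) :
    Summable fun k => max ((a k)⁻¹ - r⁻¹) 0 := by
  refine summable_of_hasFiniteSupport (hfin.subset fun k hk => ?_)
  by_contra hkr
  exact hk (max_eq_right (sub_nonpos.2 (inv_anti₀ hr (not_le.1 hkr).le)))

theorem summable_inv_max_sq (ha : ∀ k, 0 < a k) (hsum : Summable fun k => (a k)⁻¹ ^ 2) :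
    Summable fun k => (max r (a k) ^ 2)⁻¹ / 2 := by
  refine (hsum.div_const 2).of_nonneg_of_le (fun k => by positivity) fun k => ?_
  have := ha k
  rw [inv_pow]
  gcongr
  exact le_max_right r (a k)

theorem intervalIntegral_ncard_setOf_le_div_sq (ha : ∀ k, 0 < a k) (hr : 0 < r)
    (hfin : {k | a k ≤ r}.Finite) :
    ∫ t in (0 : ℝ)..r, ({k | a k ≤ t}.ncard : ℝ) / t ^ 2 = ∑' k, max ((a k)⁻¹ - r⁻¹) 0 := by
  have hval := fun k => integral_Ioc_inter_Ici_inv_sq (ha k) hr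
  simp_rw [intervalIntegral.integral_of_le hr.le, div_eq_mul_inv]
  rw [integral_ncard_setOf_le_mul measurableSet_Ioc (fun t _ => by positivity)
    (fun k => integrableOn_Ioc_inter_Ici_inv_sq (ha k) r)
    ((summable_max_inv_sub_inv hr hfin).congr fun k => (hval k).symm)]
  exact tsum_congr hval

theorem integral_Ioi_ncard_setOf_le_div_cube (ha : ∀ k, 0 < a k) (hr : 0 < r)
    (hsum : Summable fun k => (a k)⁻¹ ^ 2) :
    ∫ t in Ioi r, ({k | a k ≤ t}.ncard : ℝ) / t ^ 3 = ∑' k, (max r (a k) ^ 2)⁻¹ / 2 := by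
  have hpos : ∀ k, 0 < max r (a k) := fun k => lt_max_of_lt_left hr
  have hval : ∀ k, ∫ t in Ioi r ∩ Ici (a k), (t ^ 3)⁻¹ = (max r (a k) ^ 2)⁻¹ / 2 := fun k => by
    rw [setIntegral_congr_set (Ioi_inter_Ici_ae_eq r (a k)), integral_Ioi_inv_cube (hpos k)]
  simp_rw [div_eq_mul_inv _ (_ ^ 3)]
  rw [integral_ncard_setOf_le_mul measurableSet_Ioi (fun t ht => by have := hr.trans ht; positivity)
    (fun k => (integrableOn_Ioi_inv_cube (hpos k)).congr_set_ae (Ioi_inter_Ici_ae_eq r (a k)))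
    ((summable_inv_max_sq ha hsum).congr fun k => (hval k).symm)]
  exact tsum_congr hval

end CountingIntegrals

section Product

variable {w : ℕ → ℂ}

theorem finite_setOf_norm_le (hw : ∀ n, w n ≠ 0) (hsum : Summable fun n => ‖w n‖⁻¹ ^ 2)
    (c : ℝ) : {k | ‖w k‖ ≤ c}.Finite := by
  have hd : 0 < max c 1 := lt_max_of_lt_right one_pos
  refine (eventually_cofinite.1 (hsum.tendsto_cofinite_zero.eventually_lt_const
    (pow_pos (inv_pos.2 hd) 2))).subset fun k (hk : ‖w k‖ ≤ c) => ?_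
  have : (max c 1)⁻¹ ≤ ‖w k‖⁻¹ := inv_anti₀ (norm_pos_iff.2 (hw k)) (hk.trans (le_max_left c 1))
  exact not_lt.2 (by gcongr)

theorem eventually_norm_weierstrassFactor_sub_one_le (hw : ∀ n, w n ≠ 0)
    (hsum : Summable fun n => ‖w n‖⁻¹ ^ 2) (R : ℝ) :
    ∀ᶠ n in cofinite, ∀ s : ℂ, ‖s‖ ≤ R →
      ‖weierstrassFactor (s / w n) - 1‖ ≤ 3 * R ^ 2 * ‖w n‖⁻¹ ^ 2 := by
  filter_upwards [(finite_setOf_norm_le hw hsum R).eventually_cofinite_notMem] with n hn s hs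
  have hRn : R < ‖w n‖ := not_le.1 hn
  have hsn : ‖s / w n‖ ≤ R * ‖w n‖⁻¹ := by
    rw [norm_div, div_eq_mul_inv]
    gcongr
  calc ‖weierstrassFactor (s / w n) - 1‖ ≤ 3 * ‖s / w n‖ ^ 2 :=
        norm_weierstrassFactor_sub_one_le <| by
          rw [norm_div]; exact div_le_one_of_le₀ (hs.trans hRn.le) (norm_nonneg _)
    _ ≤ 3 * (R * ‖w n‖⁻¹) ^ 2 := by gcongr
    _ = 3 * R ^ 2 * ‖w n‖⁻¹ ^ 2 := by ring

theorem summable_norm_weierstrassFactor_sub_one (hw : ∀ n, w n ≠ 0)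
    (hsum : Summable fun n => ‖w n‖⁻¹ ^ 2) (s : ℂ) :
    Summable fun n => ‖weierstrassFactor (s / w n) - 1‖ :=
  (hsum.mul_left (3 * ‖s‖ ^ 2)).of_norm_bounded_eventually <| by
    filter_upwards [eventually_norm_weierstrassFactor_sub_one_le hw hsum ‖s‖] with n hn
    simpa using hn s le_rfl

theorem multipliable_weierstrassFactor (hw : ∀ n, w n ≠ 0) (hsum : Summable fun n => ‖w n‖⁻¹ ^ 2)
    (s : ℂ) :
    Multipliable fun n => weierstrassFactor (s / w n) := by
  simpa using Complex.multipliable_one_add_of_summable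
    (summable_norm_weierstrassFactor_sub_one hw hsum s).of_norm

theorem differentiable_tprod_weierstrassFactor (hw : ∀ n, w n ≠ 0)
    (hsum : Summable fun n => ‖w n‖⁻¹ ^ 2) :
    Differentiable ℂ fun s => ∏' n, weierstrassFactor (s / w n) := by
  intro s₀
  set U := Metric.ball (0 : ℂ) (‖s₀‖ + 1)
  have hU : IsOpen U := Metric.isOpen_ball
  have hprod := Summable.hasProdLocallyUniformlyOn_one_add hU (hsum.mul_left (3 * (‖s₀‖ + 1) ^ 2))
    (f := fun n s => weierstrassFactor (s / w n) - 1) ?_ ?_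
  · simp only [add_sub_cancel] at hprod
    refine (hprod.differentiableOn (Eventually.of_forall fun _ => ?_) hU).differentiableAt
      (hU.mem_nhds (by simp [U]))
    exact DifferentiableOn.fun_finsetProd fun n _ => by unfold weierstrassFactor; fun_prop
  · filter_upwards [eventually_norm_weierstrassFactor_sub_one_le hw hsum (‖s₀‖ + 1)] with n hn s hs
    exact hn s (mem_ball_zero_iff.1 hs).le
  · intro n
    unfold weierstrassFactor
    fun_prop

theorem tprod_weierstrassFactor_eq_zero_iff (hw : ∀ n, w n ≠ 0)
    (hsum : Summable fun n => ‖w n‖⁻¹ ^ 2) (s : ℂ) :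
    ∏' n, weierstrassFactor (s / w n) = 0 ↔ ∃ n, s = w n := by
  constructor
  · intro h
    by_contra! hs
    exact tprod_one_add_ne_zero_of_summable (f := fun n => weierstrassFactor (s / w n) - 1)
      (by simpa [weierstrassFactor_div_eq_zero_iff (hw _)] using hs)
      (summable_norm_weierstrassFactor_sub_one hw hsum s) (by simpa using h)
  · rintro ⟨n, hn⟩
    exact tprod_of_exists_eq_zero ⟨n, (weierstrassFactor_div_eq_zero_iff (hw n)).2 hn⟩

theorem summable_log_norm_weierstrassFactor (hw : ∀ n, w n ≠ 0)
    (hsum : Summable fun n => ‖w n‖⁻¹ ^ 2) (s : ℂ) :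
    Summable fun n => Real.log ‖weierstrassFactor (s / w n)‖ := by
  simpa using (summable_norm_weierstrassFactor_sub_one hw hsum s).summable_log_norm_one_add

theorem log_norm_tprod_weierstrassFactor (hw : ∀ n, w n ≠ 0)
    (hsum : Summable fun n => ‖w n‖⁻¹ ^ 2) {s : ℂ} (hs : ∀ n, s ≠ w n) :
    Real.log ‖∏' n, weierstrassFactor (s / w n)‖ =
      ∑' n, Real.log ‖weierstrassFactor (s / w n)‖ := by
  have hpos : ∀ n, 0 < ‖weierstrassFactor (s / w n)‖ := fun n =>
    norm_pos_iff.2 fun h => hs n ((weierstrassFactor_div_eq_zero_iff (hw n)).1 h)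
  rw [(multipliable_weierstrassFactor hw hsum s).norm_tprod,
    ← Real.rexp_tsum_eq_tprod hpos (summable_log_norm_weierstrassFactor hw hsum s), Real.log_exp]

theorem log_norm_tprod_weierstrassFactor_le (hw : ∀ n, w n ≠ 0)
    (hsum : Summable fun n => ‖w n‖⁻¹ ^ 2) (s : ℂ) :
    Real.log ‖∏' n, weierstrassFactor (s / w n)‖ ≤ 4 * (2 + Real.log 2) *
      (‖s‖ * (∫ t in (0 : ℝ)..‖s‖, ({k | ‖w k‖ ≤ t}.ncard : ℝ) / t ^ 2) +
        ‖s‖ ^ 2 * ∫ t in Ioi ‖s‖, ({k | ‖w k‖ ≤ t}.ncard : ℝ) / t ^ 3) := by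
  rcases eq_or_ne s 0 with rfl | hs0
  · simp [weierstrassFactor]
  set C := 4 * (2 + Real.log 2)
  have hC : 6 ≤ C := by linarith [Real.log_nonneg one_le_two]
  have hr : 0 < ‖s‖ := norm_pos_iff.2 hs0
  have ha : ∀ k, 0 < ‖w k‖ := fun k => norm_pos_iff.2 (hw k)
  have hα := summable_max_inv_sub_inv (a := (‖w ·‖)) hr (finite_setOf_norm_le hw hsum _)
  have hβ := summable_inv_max_sq (r := ‖s‖) ha hsum
  have hbound : Summable fun k =>
      C * (‖s‖ * max (‖w k‖⁻¹ - ‖s‖⁻¹) 0 + ‖s‖ ^ 2 * ((max ‖s‖ ‖w k‖ ^ 2)⁻¹ / 2)) :=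
    ((hα.mul_left _).add (hβ.mul_left _)).mul_left _
  rw [intervalIntegral_ncard_setOf_le_div_sq ha hr (finite_setOf_norm_le hw hsum _),
    integral_Ioi_ncard_setOf_le_div_cube ha hr hsum, ← tsum_mul_left, ← tsum_mul_left,
    ← hα.mul_left _ |>.tsum_add (hβ.mul_left _), ← tsum_mul_left]
  by_cases hs : ∀ n, s ≠ w n
  · rw [log_norm_tprod_weierstrassFactor hw hsum hs]
    refine (summable_log_norm_weierstrassFactor hw hsum s).tsum_le_tsum (fun k => ?_) hbound
    exact (log_norm_weierstrassFactor_div_le hs0 (hw k)).trans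
      (mul_le_mul_of_nonneg_right hC (by positivity))
  · rw [(tprod_weierstrassFactor_eq_zero_iff hw hsum s).2 (not_forall_not.1 hs), norm_zero,
      Real.log_zero]
    exact tsum_nonneg fun k => by positivity

end Product

/-- The Weierstrass-type product `Π(s) = ∏ₙ (1 - s/wₙ) e^{s/wₙ}` over a sequence `wₙ` of
nonzero complex numbers with `Σ |wₙ|⁻² < ∞` converges, defines an entire function whose
zeros are exactly the `wₙ`, and satisfies
`log|Π(s)| ≤ 4(2 + log 2)(|s| ∫₀^{|s|} n(t)/t² dt + |s|² ∫_{|s|}^∞ n(t)/t³ dt)`,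
where `n(t) = #{k : |w_k| ≤ t}` (counted with multiplicity). -/
theorem stmt12 (w : ℕ → ℂ) (hw : ∀ n, w n ≠ 0)
    (hsum : Summable fun n => ‖w n‖⁻¹ ^ 2)
    (cnt : ℝ → ℝ) (hcnt : ∀ t : ℝ, cnt t = (Set.ncard {k : ℕ | ‖w k‖ ≤ t} : ℝ)) :
    (∀ s : ℂ, Multipliable fun n => (1 - s / w n) * Complex.exp (s / w n)) ∧
    Differentiable ℂ (fun s : ℂ => ∏' n, (1 - s / w n) * Complex.exp (s / w n)) ∧
    (∀ s : ℂ, (∏' n, (1 - s / w n) * Complex.exp (s / w n)) = 0 ↔ ∃ n, s = w n) ∧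
    (∀ s : ℂ, Real.log ‖∏' n, (1 - s / w n) * Complex.exp (s / w n)‖ ≤
      4 * (2 + Real.log 2) *
        (‖s‖ * (∫ t in (0:ℝ)..‖s‖, cnt t / t ^ 2) +
          ‖s‖ ^ 2 * ∫ t in Set.Ioi ((‖s‖ : ℝ)), cnt t / t ^ 3)) := by
  simp only [hcnt]
  exact ⟨multipliable_weierstrassFactor hw hsum, differentiable_tprod_weierstrassFactor hw hsum,
    tprod_weierstrassFactor_eq_zero_iff hw hsum, log_norm_tprod_weierstrassFactor_le hw hsum⟩
end

section
/- Let f be meromorphic on ℂ, analytic and nonconstant on a strip b < Re(s) < c (b, c possibly ±∞), and uniformly almost periodic in the sense of Bohr on that strip. Suppose the equation f(s) = a has a solution in the strip. Then there exists a constant c₀ > 0 such that N(r,a;f) ≥ c₀·r for all sufficiently large r. -/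
/-! The `a`-point `s₀` of `f` in the strip is isolated, so `|f - a| ≥ ε` on a small circle
around it. Along a relatively dense set of vertical `ε/2`-almost periods `ω`, the translate
`f(· + iω)` is `ε/2`-close to `f`, so by the minimum modulus principle it still takes the value
`a` inside the circle. This produces an `a`-point in every window of fixed height up the
strip, hence `n(r, a; f) ≳ r`, and integrating gives `N(r, a; f) ≳ r`. -/

open Complex Filter MeasureTheory Classical

/-- The order of `f` at `z` as an integer: positive for zeros, negative for poles,
`0` if `f` is not meromorphic at `z` or the order is infinite. -/

noncomputable def merOrd (f : ℂ → ℂ) (z : ℂ) : ℤ :=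
  if h : MeromorphicAt f z then (meromorphicOrderAt f z).untopD 0 else 0

/-- `n(r, a; f)`: number of solutions of `f s = a` in `|s| ≤ r`, counted with multiplicity. -/
noncomputable def countZeros (f : ℂ → ℂ) (a : ℂ) (r : ℝ) : ℝ :=
  ∑ᶠ z ∈ Metric.closedBall (0 : ℂ) r, (((merOrd (fun s => f s - a) z).toNat : ℝ))

/-- `n(r, ∞; f)`: number of poles of `f` in `|s| ≤ r`, counted with multiplicity. -/
noncomputable def countPoles (f : ℂ → ℂ) (r : ℝ) : ℝ :=
  ∑ᶠ z ∈ Metric.closedBall (0 : ℂ) r, (((-(merOrd f z)).toNat : ℝ))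

/-- The integrated counting function `N(r, a; f)`. -/
noncomputable def Ncount (f : ℂ → ℂ) (a : ℂ) (r : ℝ) : ℝ :=
  (∫ t in (0:ℝ)..r, (countZeros f a t - countZeros f a 0) / t) +
    countZeros f a 0 * Real.log r

/-- The integrated counting function `N(r, ∞; f)` of the poles. -/
noncomputable def NcountPoles (f : ℂ → ℂ) (r : ℝ) : ℝ :=
  (∫ t in (0:ℝ)..r, (countPoles f t - countPoles f 0) / t) +
    countPoles f 0 * Real.log r

/-- The Nevanlinna proximity function `m(r, f)`. -/
noncomputable def proximity (f : ℂ → ℂ) (r : ℝ) : ℝ :=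
  (2 * Real.pi)⁻¹ *
    ∫ θ in (0:ℝ)..(2 * Real.pi), Real.log (max (‖f ((r : ℂ) * Complex.exp ((θ : ℂ) * Complex.I))‖) 1)

/-- The Nevanlinna characteristic `T(r, f) = m(r, f) + N(r, ∞; f)`. -/
noncomputable def Tchar (f : ℂ → ℂ) (r : ℝ) : ℝ := proximity f r + NcountPoles f r

/-- `f` has finite order: `T(r, f) = O(r ^ ρ)` for some `ρ < ∞`. -/
def FiniteOrder (f : ℂ → ℂ) : Prop :=
  ∃ ρ : ℝ, (fun r : ℝ => Tchar f r) =O[atTop] fun r : ℝ => r ^ ρ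

/-- `f` has order `< σ`: `T(r, f) = O(r ^ ρ)` for some `ρ < σ`. -/
def OrderLT (f : ℂ → ℂ) (σ : ℝ) : Prop :=
  ∃ ρ : ℝ, ρ < σ ∧ (fun r : ℝ => Tchar f r) =O[atTop] fun r : ℝ => r ^ ρ

/-- `f` is uniformly almost periodic (in the sense of Bohr) on a set `S ⊆ ℂ`: for every
`ε > 0` the set of `ω ∈ ℝ` with `|f(s + iω) - f(s)| < ε` on `S` is relatively dense. -/
def UnifAlmostPeriodicOn (f : ℂ → ℂ) (S : Set ℂ) : Prop :=
  ∀ ε : ℝ, 0 < ε → ∃ L : ℝ, 0 < L ∧ ∀ x : ℝ, ∃ ω ∈ Set.Icc x (x + L),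
    ∀ s ∈ S, ‖f (s + (ω : ℂ) * Complex.I) - f s‖ < ε

open Topology Metric Set

def verticalStrip (b c : EReal) : Set ℂ := {s : ℂ | b < (s.re : EReal) ∧ (s.re : EReal) < c}

lemma isOpen_verticalStrip (b c : EReal) : IsOpen (verticalStrip b c) :=
  (isOpen_Ioo.preimage continuous_coe_real_ereal).preimage continuous_re

lemma convex_verticalStrip (b c : EReal) : Convex ℝ (verticalStrip b c) :=
  (ordConnected_Ioo.preimage_mono EReal.coe_strictMono.monotone).convex.linear_preimage
    Complex.reLm

lemma add_ofReal_mul_I_mem_verticalStrip {b c : EReal} {s : ℂ} (hs : s ∈ verticalStrip b c)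
    (ω : ℝ) : s + ω * I ∈ verticalStrip b c := by
  simpa [verticalStrip] using hs

lemma exists_mem_closedBall_eq_of_norm_sub_lt {f : ℂ → ℂ} {z₀ a : ℂ} {r ε : ℝ} (hr : 0 < r)
    (hf : DifferentiableOn ℂ f (closedBall z₀ r))
    (hsph : ∀ z ∈ sphere z₀ r, ε ≤ ‖f z - a‖) (hz₀ : ‖f z₀ - a‖ < ε) :
    ∃ w ∈ closedBall z₀ r, f w = a := by
  by_contra! hne
  have hε : 0 < ε := (norm_nonneg _).trans_lt hz₀
  have hG : DiffContOnCl ℂ (fun z => (f z - a)⁻¹) (ball z₀ r) :=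
    ((hf.sub_const a).inv fun z hz => sub_ne_zero.mpr (hne z hz)).diffContOnCl_ball le_rfl
  have hmax : ‖(f z₀ - a)⁻¹‖ ≤ ε⁻¹ := by
    refine Complex.norm_le_of_forall_mem_frontier_norm_le isBounded_ball hG (fun z hz => ?_)
      (subset_closure (mem_ball_self hr))
    rw [frontier_ball z₀ hr.ne'] at hz
    rw [norm_inv]
    exact inv_anti₀ hε (hsph z hz)
  have hpos : 0 < ‖f z₀ - a‖ :=
    norm_pos_iff.mpr (sub_ne_zero.mpr (hne z₀ (mem_closedBall_self hr.le)))
  rw [norm_inv, inv_le_inv₀ hpos hε] at hmax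
  linarith

lemma exists_closedBall_subset_forall_sphere_le_norm_sub {f : ℂ → ℂ} {s₀ : ℂ} {U : Set ℂ}
    (hU : U ∈ 𝓝 s₀) (hf : ContinuousOn f U) (hiso : ∀ᶠ z in 𝓝[≠] s₀, f z ≠ f s₀) :
    ∃ δ > 0, closedBall s₀ δ ⊆ U ∧ ∃ ε > 0, ∀ z ∈ sphere s₀ δ, ε ≤ ‖f z - f s₀‖ := by
  obtain ⟨δ₀, hδ₀, hball⟩ :=
    Metric.eventually_nhds_iff.mp ((eventually_nhdsWithin_iff.mp hiso).and hU)
  have hsub : closedBall s₀ (δ₀ / 2) ⊆ ball s₀ δ₀ := closedBall_subset_ball (by linarith)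
  have hne : ∀ z ∈ sphere s₀ (δ₀ / 2), f z - f s₀ ≠ 0 := fun z hz =>
    sub_ne_zero.mpr ((hball (hsub (sphere_subset_closedBall hz))).1
      (ne_of_mem_sphere hz (by linarith)))
  obtain ⟨z₁, hz₁, hmin⟩ := (isCompact_sphere s₀ (δ₀ / 2)).exists_isMinOn
    (NormedSpace.sphere_nonempty.mpr (by linarith))
    ((hf.mono fun z hz => (hball (hsub (sphere_subset_closedBall hz))).2).sub
      continuousOn_const).norm
  exact ⟨δ₀ / 2, by linarith, fun z hz => (hball (hsub hz)).2, ‖f z₁ - f s₀‖,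
    norm_pos_iff.mpr (hne z₁ hz₁), isMinOn_iff.mp hmin⟩

lemma UnifAlmostPeriodicOn.exists_eq_near_translates {f : ℂ → ℂ} {S : Set ℂ}
    (hap : UnifAlmostPeriodicOn f S) (hf : DifferentiableOn ℂ f S)
    (hS : ∀ s ∈ S, ∀ ω : ℝ, s + ω * I ∈ S) {s₀ : ℂ} {δ ε : ℝ} (hδ : 0 < δ) (hε : 0 < ε)
    (hball : closedBall s₀ δ ⊆ S) (hsph : ∀ z ∈ sphere s₀ δ, ε ≤ ‖f z - f s₀‖) :
    ∃ L > 0, ∀ x : ℝ, ∃ ω ∈ Icc x (x + L), ∃ w ∈ closedBall s₀ δ, f (w + ω * I) = f s₀ := by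
  obtain ⟨L, hL, hper⟩ := hap (ε / 2) (half_pos hε)
  refine ⟨L, hL, fun x => ?_⟩
  obtain ⟨ω, hω, hclose⟩ := hper x
  refine ⟨ω, hω, exists_mem_closedBall_eq_of_norm_sub_lt (f := fun s => f (s + ω * I)) hδ
    (hf.comp (differentiableOn_id.add_const _) fun s hs => hS s (hball hs) ω)
    (fun z hz => ?_) (hclose s₀ (hball (mem_closedBall_self hδ.le)))⟩
  have h₁ := hsph z hz
  have h₂ := hclose z (hball (sphere_subset_closedBall hz))
  have h₃ := norm_sub_le_norm_sub_add_norm_sub (f z) (f (z + ω * I)) (f s₀)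
  rw [norm_sub_rev (f z) (f (z + ω * I))] at h₃
  linarith

lemma AnalyticOnNhd.analyticOrderAt_sub_const_ne_top {f : ℂ → ℂ} {S : Set ℂ}
    (hf : AnalyticOnNhd ℂ f S) (hS : IsPreconnected S) (hnc : ¬ ∃ k : ℂ, ∀ s ∈ S, f s = k)
    {w : ℂ} (hw : w ∈ S) (a : ℂ) : analyticOrderAt (fun s => f s - a) w ≠ ⊤ := by
  intro htop
  refine hnc ⟨a, hf.eqOn_of_preconnected_of_eventuallyEq analyticOnNhd_const hS hw ?_⟩
  filter_upwards [analyticOrderAt_eq_top.mp htop] with z hz using sub_eq_zero.mp hz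

lemma AnalyticOnNhd.eventually_ne_of_isPreconnected {f : ℂ → ℂ} {S : Set ℂ}
    (hf : AnalyticOnNhd ℂ f S) (hS : IsPreconnected S) (hnc : ¬ ∃ k : ℂ, ∀ s ∈ S, f s = k)
    {w : ℂ} (hw : w ∈ S) (a : ℂ) : ∀ᶠ z in 𝓝[≠] w, f z ≠ a := by
  by_contra h
  rw [not_eventually] at h
  simp only [not_not] at h
  exact hnc ⟨a, hf.eqOn_of_preconnected_of_frequently_eq analyticOnNhd_const hS hw h⟩

lemma one_le_toNat_merOrd {g : ℂ → ℂ} {w : ℂ} (hg : AnalyticAt ℂ g w) (hw : g w = 0)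
    (htop : analyticOrderAt g w ≠ ⊤) : 1 ≤ (merOrd g w).toNat := by
  obtain ⟨k, hk⟩ := ENat.ne_top_iff_exists.mp htop
  have hk0 : k ≠ 0 := by
    rintro rfl
    exact (hg.analyticOrderAt_eq_zero.mp hk.symm) hw
  rw [merOrd, dif_pos hg.meromorphicAt, hg.meromorphicOrderAt_eq, ← hk]
  simp only [ENat.map_natCast, WithTop.untopD_coe, Int.toNat_natCast]
  omega

lemma MeromorphicOn.locallyFiniteSupport_toNat_merOrd {g : ℂ → ℂ} (hg : MeromorphicOn g univ) :
    LocallyFiniteSupport fun z => ((merOrd g z).toNat : ℝ) := by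
  intro z
  obtain ⟨t, ht, hfin⟩ :=
    Function.locallyFinsupp.locallyFiniteSupport (MeromorphicOn.divisor g univ) z
  refine ⟨t, ht, hfin.subset (inter_subset_inter_right _ fun w hw => ?_)⟩
  have hw' : merOrd g w ≠ 0 := by
    intro h0
    simp [h0] at hw
  rw [merOrd, dif_pos (hg w trivial)] at hw'
  simpa [Function.locallyFinsuppWithin.toFun_eq_coe,
    MeromorphicOn.divisor_apply hg (mem_univ w), WithTop.untop₀] using hw'

lemma exists_injective_norm_le_of_forall_exists {P : ℂ → Prop} {s₀ : ℂ} {δ L : ℝ}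
    (hδ : 0 ≤ δ) (hL : 0 ≤ L)
    (h : ∀ x : ℝ, ∃ ω ∈ Icc x (x + L), ∃ w ∈ closedBall s₀ δ, P (w + ω * I)) :
    ∃ z : ℕ → ℂ, Function.Injective z ∧ (∀ k, P (z k)) ∧
      ∀ k : ℕ, ‖z k‖ ≤ ‖s₀‖ + δ + L + k * (L + 2 * δ + 1) := by
  -- the imaginary parts of the `k`-th point lie in `[kB - δ, kB + L + δ]` (shifted by `s₀.im`),
  -- and these windows are disjoint because the step `B = L + 2δ + 1` exceeds their length
  choose ω hω w hw hP using fun k : ℕ => h (k * (L + 2 * δ + 1))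
  have hwim : ∀ k, |(w k).im - s₀.im| ≤ δ := fun k =>
    (abs_im_le_norm (w k - s₀)).trans (by simpa [dist_eq_norm] using hw k)
  have hmono : StrictMono fun k => (w k + ω k * I).im := by
    refine strictMono_nat_of_lt_succ fun k => ?_
    have h1 := (hω k).2
    have h2 := (hω (k + 1)).1
    have h3 := abs_le.mp (hwim k)
    have h4 := abs_le.mp (hwim (k + 1))
    push_cast at h2
    simp only [add_im, mul_im, ofReal_re, I_im, ofReal_im, I_re, mul_zero, add_zero, mul_one]
    linarith
  refine ⟨fun k => w k + ω k * I, hmono.injective.of_comp, hP, fun k => ?_⟩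
  have hω0 : 0 ≤ ω k := le_trans (by positivity) (hω k).1
  calc ‖w k + ω k * I‖ ≤ ‖w k‖ + ω k := by
        simpa [abs_of_nonneg hω0] using norm_add_le (w k) (ω k * I)
    _ ≤ (‖s₀‖ + δ) + (k * (L + 2 * δ + 1) + L) := by
        have := norm_le_norm_add_norm_sub' (w k) s₀
        have := mem_closedBall_iff_norm.mp (hw k)
        linarith [(hω k).2]
    _ = _ := by ring

lemma UnifAlmostPeriodicOn.exists_injective_eq_norm_le_linear {f : ℂ → ℂ} {S : Set ℂ}
    (hap : UnifAlmostPeriodicOn f S) (hS : IsOpen S) (hvert : ∀ s ∈ S, ∀ ω : ℝ, s + ω * I ∈ S)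
    (hf : AnalyticOnNhd ℂ f S) {s₀ : ℂ} (hs₀ : s₀ ∈ S) (hiso : ∀ᶠ z in 𝓝[≠] s₀, f z ≠ f s₀) :
    ∃ z : ℕ → ℂ, Function.Injective z ∧ (∀ k, z k ∈ S ∧ f (z k) = f s₀) ∧
      ∃ A, ∃ B > 0, ∀ k : ℕ, ‖z k‖ ≤ A + k * B := by
  obtain ⟨δ, hδ, hball, ε, hε, hsph⟩ :=
    exists_closedBall_subset_forall_sphere_le_norm_sub (hS.mem_nhds hs₀) hf.continuousOn hiso
  obtain ⟨L, hL, hper⟩ := hap.exists_eq_near_translates hf.differentiableOn hvert hδ hε hball hsph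
  have hpoints (x : ℝ) : ∃ ω ∈ Icc x (x + L), ∃ w ∈ closedBall s₀ δ,
      w + ω * I ∈ S ∧ f (w + ω * I) = f s₀ := by
    obtain ⟨ω, hω, w, hw, hfw⟩ := hper x
    exact ⟨ω, hω, w, hw, hvert w (hball hw) ω, hfw⟩
  obtain ⟨z, hz, hzP, hzA⟩ := exists_injective_norm_le_of_forall_exists
    (P := fun w => w ∈ S ∧ f w = f s₀) hδ.le hL.le hpoints
  exact ⟨z, hz, hzP, _, _, by positivity, hzA⟩

section CountingFunction

lemma finsum_mem_le_finsum_mem_of_subset {α : Type*} {m : α → ℝ} {s t : Set α} (hst : s ⊆ t)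
    (ht : (t ∩ Function.support m).Finite) (hm : 0 ≤ m) :
    ∑ᶠ z ∈ s, m z ≤ ∑ᶠ z ∈ t, m z := by
  rw [← finsum_mem_inter_add_sdiff' s ht, inter_eq_right.mpr hst]
  exact le_add_of_nonneg_right (finsum_nonneg fun z => finsum_nonneg fun _ => hm z)

variable {m : ℂ → ℝ}

lemma LocallyFiniteSupport.monotone_finsum_mem_closedBall (hm : LocallyFiniteSupport m)
    (hm0 : 0 ≤ m) : Monotone fun t : ℝ => ∑ᶠ z ∈ closedBall (0 : ℂ) t, m z :=
  fun _ _ h => finsum_mem_le_finsum_mem_of_subset (closedBall_subset_closedBall h)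
    (hm.finite_inter_support_of_isCompact (isCompact_closedBall _ _)) hm0

lemma LocallyFiniteSupport.card_le_finsum_mem_closedBall (hm : LocallyFiniteSupport m)
    (hm0 : 0 ≤ m) {W : Finset ℂ} {t : ℝ} (hW : ↑W ⊆ closedBall (0 : ℂ) t)
    (hW1 : ∀ w ∈ W, 1 ≤ m w) : (W.card : ℝ) ≤ ∑ᶠ z ∈ closedBall (0 : ℂ) t, m z :=
  calc (W.card : ℝ) = ∑ _w ∈ W, 1 := by simp
    _ ≤ ∑ w ∈ W, m w := Finset.sum_le_sum hW1
    _ = ∑ᶠ w ∈ (W : Set ℂ), m w := (finsum_mem_coe_finset _ _).symm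
    _ ≤ _ := finsum_mem_le_finsum_mem_of_subset hW
      (hm.finite_inter_support_of_isCompact (isCompact_closedBall _ _)) hm0

lemma LocallyFiniteSupport.exists_finsum_mem_closedBall_eq (hm : LocallyFiniteSupport m) :
    ∃ ρ > 0, ∀ t ∈ Ico 0 ρ,
      ∑ᶠ z ∈ closedBall (0 : ℂ) t, m z = ∑ᶠ z ∈ closedBall (0 : ℂ) 0, m z := by
  obtain ⟨U, hU, hfin⟩ := hm 0
  have hF : ((U ∩ Function.support m) \ {0})ᶜ ∈ 𝓝 (0 : ℂ) :=
    (hfin.sdiff.isClosed.isOpen_compl).mem_nhds fun h => h.2 rfl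
  obtain ⟨ρ, hρ, hball⟩ := Metric.mem_nhds_iff.mp (inter_mem hU hF)
  refine ⟨ρ, hρ, fun t ⟨ht0, htρ⟩ => ?_⟩
  have hsupp : closedBall (0 : ℂ) t ∩ Function.support m = {0} ∩ Function.support m := by
    ext z
    refine ⟨fun ⟨hz, hzm⟩ => ⟨?_, hzm⟩, fun ⟨hz, hzm⟩ => ⟨?_, hzm⟩⟩
    · obtain ⟨hzU, hzF⟩ := hball (closedBall_subset_ball htρ hz)
      by_contra hz0
      exact hzF ⟨⟨hzU, hzm⟩, hz0⟩
    · rw [mem_singleton_iff.mp hz]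
      exact mem_closedBall_self ht0
  rw [← finsum_mem_inter_support, hsupp, finsum_mem_inter_support, closedBall_zero]

lemma LocallyFiniteSupport.eventually_le_finsum_mem_closedBall (hm : LocallyFiniteSupport m)
    (hm0 : 0 ≤ m) {z : ℕ → ℂ} (hz : Function.Injective z) (hz1 : ∀ k, 1 ≤ m (z k))
    {A B : ℝ} (hB : 0 < B) (hzA : ∀ k : ℕ, ‖z k‖ ≤ A + k * B) :
    ∀ᶠ t in atTop, (2 * B)⁻¹ * t ≤ ∑ᶠ w ∈ closedBall (0 : ℂ) t, m w := by
  have hA : 0 ≤ A := by simpa using (norm_nonneg _).trans (hzA 0)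
  filter_upwards [eventually_ge_atTop (2 * A)] with t ht
  set N := ⌊(t - A) / B⌋₊
  have hN : (t - A) / B < N + 1 := Nat.lt_floor_add_one _
  have hNB : N * B ≤ t - A := (le_div_iff₀ hB).mp (Nat.floor_le (div_nonneg (by linarith) hB.le))
  have hcount : ((N + 1 : ℕ) : ℝ) ≤ ∑ᶠ w ∈ closedBall (0 : ℂ) t, m w := by
    rw [← Finset.card_range (N + 1), ← Finset.card_image_of_injective _ hz]
    refine hm.card_le_finsum_mem_closedBall hm0 ?_ (by simp [hz1])
    simp only [Finset.coe_image, Finset.coe_range, image_subset_iff]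
    intro k hk
    have : (k : ℝ) * B ≤ N * B := by gcongr; exact_mod_cast Nat.lt_succ_iff.mp hk
    simpa using (hzA k).trans (by linarith)
  calc (2 * B)⁻¹ * t ≤ (t - A) / B := by
        rw [div_eq_mul_inv, mul_inv, mul_comm]; nlinarith [inv_pos.mpr hB]
    _ ≤ _ := by push_cast at hcount; linarith

end CountingFunction

section IntegratedCounting

variable {n : ℝ → ℝ} {ρ : ℝ}

lemma intervalIntegrable_sub_div_of_monotone (hn : Monotone n) (hρ : 0 < ρ)
    (hconst : ∀ t ∈ Ico 0 ρ, n t = n 0) {r : ℝ} (hr : 0 ≤ r) :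
    IntervalIntegrable (fun t => (n t - n 0) / t) volume 0 r := by
  rw [intervalIntegrable_iff_integrableOn_Ioc_of_le hr]
  refine (integrableOn_const (C := (n r - n 0) / ρ) measure_Ioc_lt_top.ne).mono'
    (((hn.measurable.sub measurable_const).div measurable_id).aestronglyMeasurable)
    ((ae_restrict_iff' measurableSet_Ioc).mpr (.of_forall fun t ⟨ht0, htr⟩ => ?_))
  rw [Real.norm_eq_abs, abs_of_nonneg (div_nonneg (sub_nonneg.mpr (hn ht0.le)) ht0.le)]
  rcases lt_or_ge t ρ with htρ | htρ
  · rw [hconst t ⟨ht0.le, htρ⟩, sub_self, zero_div]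
    exact div_nonneg (sub_nonneg.mpr (hn hr)) hρ.le
  · exact div_le_div₀ (sub_nonneg.mpr (hn hr)) (sub_le_sub_right (hn htr) _) hρ htρ

lemma eventually_linear_le_integral_sub_div (hn : Monotone n) (hρ : 0 < ρ)
    (hconst : ∀ t ∈ Ico 0 ρ, n t = n 0) (hn0 : 0 ≤ n 0) {c : ℝ} (hc : 0 < c)
    (hlin : ∀ᶠ t in atTop, c * t ≤ n t) :
    ∀ᶠ r in atTop, c / 8 * r ≤ (∫ t in (0 : ℝ)..r, (n t - n 0) / t) + n 0 * Real.log r := by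
  filter_upwards [(tendsto_id.atTop_div_const two_pos).eventually hlin, eventually_ge_atTop 1,
    eventually_ge_atTop (4 * n 0 / c)] with r hr2 hr1 hrc
  have hint : ∀ s, 0 ≤ s → IntervalIntegrable (fun t => (n t - n 0) / t) volume 0 s :=
    fun s hs => intervalIntegrable_sub_div_of_monotone hn hρ hconst hs
  have hint₁ := hint (r / 2) (by linarith)
  have hint₂ := hint₁.symm.trans (hint r (by linarith))
  have hlower : (n (r / 2) - n 0) / 2 ≤ ∫ t in (r / 2)..r, (n t - n 0) / t := by
    have := intervalIntegral.integral_mono_on (by linarith) intervalIntegrable_const hint₂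
      fun t ⟨ht1, ht2⟩ => div_le_div₀ (sub_nonneg.mpr (hn (by linarith)))
        (sub_le_sub_right (hn ht1) _) (by linarith) ht2
    rw [intervalIntegral.integral_const, smul_eq_mul] at this
    calc (n (r / 2) - n 0) / 2 = (r - r / 2) * ((n (r / 2) - n 0) / r) := by field_simp; ring
      _ ≤ _ := this
  rw [← intervalIntegral.integral_add_adjacent_intervals hint₁ hint₂]
  have h0 : 0 ≤ ∫ t in (0 : ℝ)..(r / 2), (n t - n 0) / t :=
    intervalIntegral.integral_nonneg (by linarith) fun t ht =>
      div_nonneg (sub_nonneg.mpr (hn ht.1)) ht.1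
  have hlog : 0 ≤ n 0 * Real.log r := mul_nonneg hn0 (Real.log_nonneg hr1)
  have hcr : 4 * n 0 ≤ c * r := by rwa [div_le_iff₀' hc] at hrc
  simp only [id] at hr2
  nlinarith

end IntegratedCounting

/-- If `f` is meromorphic on `ℂ`, analytic, nonconstant and uniformly almost periodic on
a strip `b < Re s < c` (where `b, c` may be `±∞`), and `f = a` has a solution in the
strip, then `N(r,a;f) ≥ c₀ r` for some `c₀ > 0` and all large `r`. -/
theorem stmt14 (f : ℂ → ℂ) (hmer : MeromorphicOn f Set.univ)
    (b c : EReal) (S : Set ℂ) (hS : S = {s : ℂ | b < (s.re : EReal) ∧ (s.re : EReal) < c})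
    (hana : ∀ z ∈ S, AnalyticAt ℂ f z)
    (hnc : ¬ ∃ k : ℂ, ∀ s ∈ S, f s = k)
    (hap : UnifAlmostPeriodicOn f S)
    (a : ℂ) (hsol : ∃ s₀ ∈ S, f s₀ = a) :
    ∃ c₀ : ℝ, 0 < c₀ ∧ ∀ᶠ r in atTop, c₀ * r ≤ Ncount f a r := by
  change S = verticalStrip b c at hS
  subst hS
  obtain ⟨s₀, hs₀, rfl⟩ := hsol
  have hf : AnalyticOnNhd ℂ f (verticalStrip b c) := hana
  have hS := (convex_verticalStrip b c).isPreconnected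
  obtain ⟨z, hz, hzS, A, B, hB, hzA⟩ := hap.exists_injective_eq_norm_le_linear
    (isOpen_verticalStrip b c) (fun _ hs ω => add_ofReal_mul_I_mem_verticalStrip hs ω) hf hs₀
    (hf.eventually_ne_of_isPreconnected hS hnc hs₀ _)
  set m : ℂ → ℝ := fun w => ((merOrd (fun s => f s - f s₀) w).toNat : ℝ)
  have hz1 (k : ℕ) : 1 ≤ m (z k) := Nat.one_le_cast.mpr <|
    one_le_toNat_merOrd ((hf _ (hzS k).1).sub analyticAt_const) (sub_eq_zero.mpr (hzS k).2)
      (hf.analyticOrderAt_sub_const_ne_top hS hnc (hzS k).1 _)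
  have hm : LocallyFiniteSupport m :=
    (hmer.sub (MeromorphicOn.const _)).locallyFiniteSupport_toNat_merOrd
  have hm0 : 0 ≤ m := fun _ => Nat.cast_nonneg _
  obtain ⟨ρ, hρ, hconst⟩ := hm.exists_finsum_mem_closedBall_eq
  exact ⟨_, by positivity, eventually_linear_le_integral_sub_div
    (hm.monotone_finsum_mem_closedBall hm0) hρ hconst
    (finsum_nonneg fun w => finsum_nonneg fun _ => hm0 w) (by positivity)
    (hm.eventually_le_finsum_mem_closedBall hm0 hz hz1 hB hzA)⟩
end

section
/- Let f be analytic and uniformly almost periodic in the sense of Bohr in a half-plane Re(s) > b, and suppose f(s) tends to a nonzero finite limit A₀ as Re(s) → +∞. Then for any τ > 0 the function Λf(s) = f(s + τ)/f(s) is uniformly almost periodic in the sense of Bohr in some right half-plane Re(s) > b′. -/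
open Complex Filter

/-!
An `ε`-almost period of `f` is also one of every horizontal translate `f (· + τ)`, so `f`
and `f (· + τ)` share their almost periods. On a half-plane far to the right, `f` stays
close to `A₀ ≠ 0`, hence is bounded and bounded away from `0` there; a common
`δ`-almost period of a bounded numerator and a denominator bounded below by `m > 0` is
an `ε`-almost period of their quotient once `δ (m + |M|) ≤ ε m²`.
-/

def IsAlmostPeriodOn (f : ℂ → ℂ) (S : Set ℂ) (ε ω : ℝ) : Prop :=
  ∀ s ∈ S, ‖f (s + ω * I) - f s‖ < ε

namespace IsAlmostPeriodOn

variable {f : ℂ → ℂ} {S T : Set ℂ} {ε ω : ℝ}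

theorem mono (hf : IsAlmostPeriodOn f T ε ω) (hST : S ⊆ T) : IsAlmostPeriodOn f S ε ω :=
  fun s hs => hf s (hST hs)

theorem comp_add (hf : IsAlmostPeriodOn f T ε ω) {τ : ℂ} (hST : ∀ s ∈ S, s + τ ∈ T) :
    IsAlmostPeriodOn (fun s => f (s + τ)) S ε ω := by
  intro s hs
  simpa only [add_right_comm s] using hf (s + τ) (hST s hs)

end IsAlmostPeriodOn

theorem norm_div_sub_div_le {𝕜 : Type*} [NormedField 𝕜] {a b c d : 𝕜} (hb : b ≠ 0)
    (hd : d ≠ 0) :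
    ‖a / b - c / d‖ ≤ ‖a - c‖ / ‖b‖ + ‖c‖ * ‖b - d‖ / (‖b‖ * ‖d‖) := by
  have split : a / b - c / d = (a - c) / b - c * (b - d) / (b * d) := by
    field_simp
    ring
  rw [split, ← norm_div, ← norm_mul, ← norm_mul, ← norm_div]
  exact norm_sub_le _ _

theorem IsAlmostPeriodOn.exists_div {g h : ℂ → ℂ} {S : Set ℂ} {m M ε : ℝ} (hm : 0 < m)
    (hε : 0 < ε) (hvert : ∀ s ∈ S, ∀ ω : ℝ, s + ω * I ∈ S)
    (hg : ∀ s ∈ S, ‖g s‖ ≤ M) (hh : ∀ s ∈ S, m ≤ ‖h s‖) :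
    ∃ δ > 0, ∀ ω, IsAlmostPeriodOn g S δ ω → IsAlmostPeriodOn h S δ ω →
      IsAlmostPeriodOn (fun s => g s / h s) S ε ω := by
  refine ⟨ε * m * m / (m + |M|), by positivity, fun ω hgω hhω s hs => ?_⟩
  have hb := hh _ (hvert s hs ω)
  have hd := hh s hs
  have hc : ‖g s‖ ≤ |M| := (hg s hs).trans (le_abs_self M)
  calc ‖g (s + ω * I) / h (s + ω * I) - g s / h s‖
      ≤ ‖g (s + ω * I) - g s‖ / ‖h (s + ω * I)‖
          + ‖g s‖ * ‖h (s + ω * I) - h s‖ / (‖h (s + ω * I)‖ * ‖h s‖) :=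
        norm_div_sub_div_le (norm_pos_iff.mp (hm.trans_le hb))
          (norm_pos_iff.mp (hm.trans_le hd))
    _ < ε * m * m / (m + |M|) / m + |M| * (ε * m * m / (m + |M|)) / (m * m) := by
        refine add_lt_add_of_lt_of_le ?_ ?_
        · exact (div_le_div_of_nonneg_left (norm_nonneg _) hm hb).trans_lt
            (div_lt_div_of_pos_right (hgω s hs) hm)
        · gcongr
          exact (hhω s hs).le
    _ = ε := by field_simp

theorem UnifAlmostPeriodicOn.of_isAlmostPeriodOn {f F : ℂ → ℂ} {S T : Set ℂ}
    (hf : UnifAlmostPeriodicOn f T)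
    (h : ∀ ε > 0, ∃ δ > 0, ∀ ω,
      IsAlmostPeriodOn f T δ ω → IsAlmostPeriodOn F S ε ω) :
    UnifAlmostPeriodicOn F S := by
  intro ε hε
  obtain ⟨δ, hδ, hδε⟩ := h ε hε
  obtain ⟨L, hL, hω⟩ := hf δ hδ
  exact ⟨L, hL, fun x => (hω x).imp fun ω ⟨hmem, hper⟩ => ⟨hmem, hδε ω hper⟩⟩

theorem UnifAlmostPeriodicOn.comp_add_div {f : ℂ → ℂ} {S T : Set ℂ} {τ : ℂ} {m M : ℝ}
    (hf : UnifAlmostPeriodicOn f T) (hST : S ⊆ T) (hSτ : ∀ s ∈ S, s + τ ∈ T)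
    (hvert : ∀ s ∈ S, ∀ ω : ℝ, s + ω * I ∈ S) (hm : 0 < m)
    (hup : ∀ s ∈ S, ‖f (s + τ)‖ ≤ M) (hlow : ∀ s ∈ S, m ≤ ‖f s‖) :
    UnifAlmostPeriodicOn (fun s => f (s + τ) / f s) S :=
  hf.of_isAlmostPeriodOn fun ε hε => by
    obtain ⟨δ, hδ, hdiv⟩ := IsAlmostPeriodOn.exists_div hm hε hvert hup hlow
    exact ⟨δ, hδ, fun ω hω => hdiv ω (hω.comp_add hSτ) (hω.mono hST)⟩

theorem Filter.Tendsto.exists_forall_re_ge_norm_sub_lt {f : ℂ → ℂ} {A : ℂ}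
    (hf : Tendsto f (comap re atTop) (nhds A)) {r : ℝ} (hr : 0 < r) :
    ∃ B : ℝ, ∀ s : ℂ, B ≤ s.re → ‖f s - A‖ < r := by
  have h := Metric.tendsto_nhds.mp hf r hr
  rw [eventually_comap, eventually_atTop] at h
  obtain ⟨B, hB⟩ := h
  exact ⟨B, fun s hs => by simpa [dist_eq] using hB s.re hs s rfl⟩

theorem norm_bounds_of_norm_sub_lt_half {z A : ℂ} (h : ‖z - A‖ < ‖A‖ / 2) :
    ‖A‖ / 2 ≤ ‖z‖ ∧ ‖z‖ ≤ 2 * ‖A‖ := by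
  have lower := norm_sub_norm_le A z
  have upper := norm_le_norm_add_norm_sub' z A
  rw [norm_sub_rev] at lower
  constructor <;> linarith [norm_nonneg A]

theorem stmt16_general (f : ℂ → ℂ) (b : ℝ)
    (hap : UnifAlmostPeriodicOn f {s : ℂ | b < s.re})
    (A₀ : ℂ) (hA₀ : A₀ ≠ 0)
    (hlim : Tendsto f (comap Complex.re atTop) (nhds A₀))
    (τ : ℝ) :
    ∃ b' : ℝ, UnifAlmostPeriodicOn (fun s => f (s + (τ : ℂ)) / f s) {s : ℂ | b' < s.re} := by
  have hA₀' : 0 < ‖A₀‖ / 2 := half_pos (norm_pos_iff.mpr hA₀)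
  obtain ⟨B, hB⟩ := hlim.exists_forall_re_ge_norm_sub_lt hA₀'
  have near : ∀ s : ℂ, B ≤ s.re → ‖A₀‖ / 2 ≤ ‖f s‖ ∧ ‖f s‖ ≤ 2 * ‖A₀‖ :=
    fun s hs => norm_bounds_of_norm_sub_lt_half (hB s hs)
  have far : ∀ s : ℂ, max b B + |τ| < s.re →
      b < s.re ∧ B ≤ s.re ∧ b < (s + τ).re ∧ B ≤ (s + τ).re := by
    intro s hs
    simp only [add_re, ofReal_re]
    refine ⟨?_, ?_, ?_, ?_⟩ <;>
      linarith [le_max_left b B, le_max_right b B, abs_nonneg τ, neg_abs_le τ]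
  refine ⟨max b B + |τ|, hap.comp_add_div (M := 2 * ‖A₀‖) ?_ ?_ ?_ hA₀' ?_ ?_⟩
  · exact fun s hs => (far s hs).1
  · exact fun s hs => (far s hs).2.2.1
  · intro s hs ω
    simpa using hs
  · exact fun s hs => (near _ (far s hs).2.2.2).2
  · exact fun s hs => (near s (far s hs).2.1).1

/-- If `f` is analytic and uniformly almost periodic in a half-plane `Re s > b` and tends
to a nonzero finite limit `A₀` as `Re s → +∞`, then for any `τ > 0` the quotient
`Λf(s) = f(s + τ)/f(s)` is uniformly almost periodic in some right half-plane. -/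
theorem stmt16 (f : ℂ → ℂ) (b : ℝ)
    (hana : ∀ z : ℂ, b < z.re → AnalyticAt ℂ f z)
    (hap : UnifAlmostPeriodicOn f {s : ℂ | b < s.re})
    (A₀ : ℂ) (hA₀ : A₀ ≠ 0)
    (hlim : Tendsto f (comap Complex.re atTop) (nhds A₀))
    (τ : ℝ) (hτ : 0 < τ) :
    ∃ b' : ℝ, UnifAlmostPeriodicOn (fun s => f (s + (τ : ℂ)) / f s) {s : ℂ | b' < s.re} :=
  stmt16_general f b hap A₀ hA₀ hlim τ
end
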